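/- arXiv:2309.02648 — 3 statements merged into one kernel-verified Lean document; each statement's English description precedes it below -/
import Mathlib

section
/- Let Q ≻ 0, Q̄ ⪰ 0 be Hermitian, q, q̄ complex vectors, q̄₀ ∈ ℝ. If ς ≥ 0 and x* = (ςQ̄ + Q)⁻¹(ςq̄ + q) satisfies g(x*) = x*ᴴQ̄x* − 2 Re(q̄ᴴx*) + q̄₀ = 0, then x* is a global minimizer of f(x) = xᴴQx − 2 Re(qᴴx) over the feasible set {x : g(x) ≤ 0}. -/
/-!
With `M = ςQ̄ + Q ≻ 0` and `b = ςq̄ + q`, the Lagrangian `L = f + ς g` is, up to a constant, the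
quadratic `xᴴMx - 2 Re(bᴴx)`. Completing the square,
`xᴴMx - 2 Re(bᴴx) = (x - x*)ᴴM(x - x*) - x*ᴴMx*` since `Mx* = b`, so `x*` minimises `L`.
For feasible `x`, `f(x*) = L(x*) ≤ L(x) = f(x) + ς g(x) ≤ f(x)` because `g(x*) = 0`.
-/

open Matrix RCLike
open scoped ComplexOrder

namespace Matrix

variable {ι 𝕜 : Type*} [Fintype ι] [RCLike 𝕜]

def quadObjective (A : Matrix ι ι 𝕜) (a x : ι → 𝕜) : ℝ :=
  re (star x ⬝ᵥ A *ᵥ x) - 2 * re (star a ⬝ᵥ x)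

lemma quadObjective_smul_add (c : ℝ) (A B : Matrix ι ι 𝕜) (a b x : ι → 𝕜) :
    quadObjective ((c : 𝕜) • A + B) ((c : 𝕜) • a + b) x
      = c * quadObjective A a x + quadObjective B b x := by
  simp only [quadObjective, add_mulVec, smul_mulVec, dotProduct_add, dotProduct_smul, star_add,
    star_smul, add_dotProduct, smul_dotProduct, smul_eq_mul, map_add, star_def, conj_ofReal,
    re_ofReal_mul]
  ring

lemma IsHermitian.quadObjective_eq_of_mulVec_eq {A : Matrix ι ι 𝕜} (hA : A.IsHermitian)
    {a y : ι → 𝕜} (hy : A *ᵥ y = a) (x : ι → 𝕜) :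
    quadObjective A a x = re (star (x - y) ⬝ᵥ A *ᵥ (x - y)) - re (star y ⬝ᵥ A *ᵥ y) := by
  have hdot : ∀ v, star a ⬝ᵥ v = star y ⬝ᵥ A *ᵥ v := fun v ↦ by
    rw [← hy, star_mulVec, ← dotProduct_mulVec, hA.eq]
  have hswap : re (star x ⬝ᵥ A *ᵥ y) = re (star y ⬝ᵥ A *ᵥ x) := by
    have : star x ⬝ᵥ A *ᵥ y = star (star y ⬝ᵥ A *ᵥ x) := by
      rw [star_dotProduct, star_mulVec, ← dotProduct_mulVec, hA.eq]
    rw [this, star_def, conj_re]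
  simp only [quadObjective, hdot, star_sub, mulVec_sub, sub_dotProduct, dotProduct_sub, map_sub,
    hswap]
  ring

lemma PosSemidef.quadObjective_le_of_mulVec_eq {A : Matrix ι ι 𝕜} (hA : A.PosSemidef)
    {a y : ι → 𝕜} (hy : A *ᵥ y = a) (x : ι → 𝕜) :
    quadObjective A a y ≤ quadObjective A a x := by
  have hnonneg : 0 ≤ re (star (x - y) ⬝ᵥ A *ᵥ (x - y)) :=
    (nonneg_iff.mp (hA.dotProduct_mulVec_nonneg (x - y))).1
  rw [hA.isHermitian.quadObjective_eq_of_mulVec_eq hy x,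
    hA.isHermitian.quadObjective_eq_of_mulVec_eq hy y, sub_self, star_zero, zero_dotProduct,
    map_zero]
  linarith

end Matrix

/-- KKT sufficiency (CASE-II of Lemma 1): if ς ≥ 0 and
x* = (ςQ̄ + Q)⁻¹(ςq̄ + q) satisfies the constraint with equality, then x* is a global
minimizer of the strictly convex quadratic objective over the feasible set. -/
theorem stmt_2 {n : ℕ} (Q Qb : Matrix (Fin n) (Fin n) ℂ)
    (hQ : Q.PosDef) (hQb : Qb.PosSemidef)
    (q qb : Fin n → ℂ) (qb0 : ℝ) (ς : ℝ) (hς : 0 ≤ ς)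
    (xs : Fin n → ℂ)
    (hxs : xs = ((ς : ℂ) • Qb + Q)⁻¹.mulVec ((ς : ℂ) • qb + q))
    (hactive : (star xs ⬝ᵥ Qb.mulVec xs).re - 2 * (star qb ⬝ᵥ xs).re + qb0 = 0) :
    ∀ x : Fin n → ℂ,
      (star x ⬝ᵥ Qb.mulVec x).re - 2 * (star qb ⬝ᵥ x).re + qb0 ≤ 0 →
      (star xs ⬝ᵥ Q.mulVec xs).re - 2 * (star q ⬝ᵥ xs).re
        ≤ (star x ⬝ᵥ Q.mulVec x).re - 2 * (star q ⬝ᵥ x).re := by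
  intro x hfeas
  have hM : ((ς : ℂ) • Qb + Q).PosDef :=
    PosDef.posSemidef_add (hQb.smul (Complex.zero_le_real.mpr hς)) hQ
  have hMxs : ((ς : ℂ) • Qb + Q) *ᵥ xs = (ς : ℂ) • qb + q := by
    rw [hxs, mulVec_mulVec, mul_nonsing_inv _ ((isUnit_iff_isUnit_det _).mp hM.isUnit),
      one_mulVec]
  have hLagrangian := hM.posSemidef.quadObjective_le_of_mulVec_eq hMxs x
  have hsplit := quadObjective_smul_add ς Qb Q qb q
  simp only [ofReal_eq_complex_ofReal] at hsplit
  rw [hsplit, hsplit] at hLagrangian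
  simp only [quadObjective, re_to_complex] at hLagrangian
  nlinarith [mul_nonneg hς (neg_nonneg.mpr hfeas)]
end

section
/- Let aₖ > 0, bₖ < 0, dₖ > 0, P̄ₖ > 0, ĉ > 0, and suppose Σₖ dₖ min{−bₖ/(2aₖ), P̄ₖ}² > ĉ. If ν* > 0 satisfies Σₖ dₖ pₖ(ν*)² = ĉ where pₖ(ν) = min{−bₖ/(2aₖ + 2ν dₖ), P̄ₖ}, then {pₖ(ν*)} is an optimal solution to: minimize Σₖ (aₖ pₖ² + bₖ pₖ) subject to Σₖ dₖ pₖ² ≤ ĉ and 0 ≤ pₖ ≤ P̄ₖ. -/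
/-!
With multiplier `ν`, the Lagrangian `∑ (a p² + b p) + ν (∑ d p² - ĉ)` splits into the convex
quadratics `(a + ν d) p² + b p`, and `pₖ(ν)` is the vertex `-b / (2 (a + ν d))` of the k-th one
clipped to `P̄ₖ`, hence its minimizer on the box. Since the constraint is active at `pₖ(ν)` and
`ν ≥ 0`, weak duality makes it optimal.
-/

open Finset

theorem quadratic_isMinOn_Iic {c : ℝ} (b P : ℝ) (hc : 0 < c) :
    IsMinOn (fun x => c * x ^ 2 + b * x) (Set.Iic P) (min (-b / (2 * c)) P) := by
  intro q (hqP : q ≤ P)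
  obtain ⟨m, rfl⟩ : ∃ m, b = -(2 * c) * m := ⟨-b / (2 * c), by field_simp⟩
  have hvertex : -(-(2 * c) * m) / (2 * c) = m := by field_simp
  show c * _ ^ 2 + _ ≤ c * q ^ 2 + _
  rw [hvertex]
  rcases le_total m P with hmP | hPm
  · rw [min_eq_left hmP]
    nlinarith [sq_nonneg (q - m)]
  · rw [min_eq_right hPm]
    nlinarith [mul_nonneg (mul_nonneg hc.le (sub_nonneg.2 hqP)) (by linarith : 0 ≤ 2 * m - q - P)]

theorem sum_le_sum_of_lagrangian_le {ι : Type*} {s : Finset ι} {f g : ι → ℝ → ℝ}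
    {x y : ι → ℝ} {ν c : ℝ} (hν : 0 ≤ ν) (hx : ∑ i ∈ s, g i (x i) = c)
    (hy : ∑ i ∈ s, g i (y i) ≤ c)
    (hxy : ∀ i ∈ s, f i (x i) + ν * g i (x i) ≤ f i (y i) + ν * g i (y i)) :
    ∑ i ∈ s, f i (x i) ≤ ∑ i ∈ s, f i (y i) := by
  have hL := sum_le_sum hxy
  rw [sum_add_distrib, sum_add_distrib, ← mul_sum, ← mul_sum, hx] at hL
  nlinarith [mul_le_mul_of_nonneg_left hy hν]

theorem stmt_11_general {K : ℕ} (a b d P : Fin K → ℝ) (chat : ℝ)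
    (ha : ∀ k, 0 < a k) (hb : ∀ k, b k < 0) (hd : ∀ k, 0 < d k)
    (hP : ∀ k, 0 < P k)
    (pν : Fin K → ℝ → ℝ)
    (hpν : ∀ k ν, pν k ν = min (-(b k) / (2 * a k + 2 * ν * d k)) (P k))
    (ν : ℝ) (hν : 0 < ν)
    (heq : ∑ k, d k * (pν k ν) ^ 2 = chat) :
    (∀ k, 0 ≤ pν k ν ∧ pν k ν ≤ P k) ∧
    (∑ k, d k * (pν k ν) ^ 2) ≤ chat ∧
    (∀ p : Fin K → ℝ, (∀ k, 0 ≤ p k ∧ p k ≤ P k) →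
      (∑ k, d k * p k ^ 2) ≤ chat →
      (∑ k, (a k * (pν k ν) ^ 2 + b k * (pν k ν))) ≤ ∑ k, (a k * p k ^ 2 + b k * p k)) := by
  have hc : ∀ k, 0 < a k + ν * d k := fun k => by have := ha k; have := hd k; positivity
  have hpν' : ∀ k, pν k ν = min (-b k / (2 * (a k + ν * d k))) (P k) := fun k => by
    rw [hpν, mul_add, mul_assoc]
  refine ⟨fun k => ⟨?_, ?_⟩, heq.le, fun p hp hpc => ?_⟩
  · rw [hpν']
    exact le_min (div_nonneg (neg_nonneg.2 (hb k).le) (by linarith [hc k])) (hP k).le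
  · rw [hpν]
    exact min_le_right _ _
  · refine sum_le_sum_of_lagrangian_le (f := fun k t => a k * t ^ 2 + b k * t)
      (g := fun k t => d k * t ^ 2) hν.le heq hpc fun k _ => ?_
    have hmin := isMinOn_iff.1 (quadratic_isMinOn_Iic (b k) (P k) (hc k)) (p k) (hp k).2
    beta_reduce at hmin
    rw [← hpν'] at hmin
    linear_combination hmin

/-- Theorem 1 (CASE-II): if the box-optimal point violates the sum-power constraint and
ν* > 0 satisfies Σₖ dₖ pₖ(ν*)² = chat, then {pₖ(ν*)} is optimal for the constrained problem. -/
theorem stmt_11 {K : ℕ} (a b d P : Fin K → ℝ) (chat : ℝ)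
    (ha : ∀ k, 0 < a k) (hb : ∀ k, b k < 0) (hd : ∀ k, 0 < d k)
    (hchat : 0 < chat) (hP : ∀ k, 0 < P k)
    (hviol : chat < ∑ k, d k * (min (-(b k) / (2 * a k)) (P k)) ^ 2)
    (pν : Fin K → ℝ → ℝ)
    (hpν : ∀ k ν, pν k ν = min (-(b k) / (2 * a k + 2 * ν * d k)) (P k))
    (ν : ℝ) (hν : 0 < ν)
    (heq : ∑ k, d k * (pν k ν) ^ 2 = chat) :
    (∀ k, 0 ≤ pν k ν ∧ pν k ν ≤ P k) ∧
    (∑ k, d k * (pν k ν) ^ 2) ≤ chat ∧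
    (∀ p : Fin K → ℝ, (∀ k, 0 ≤ p k ∧ p k ≤ P k) →
      (∑ k, d k * p k ^ 2) ≤ chat →
      (∑ k, (a k * (pν k ν) ^ 2 + b k * (pν k ν))) ≤ ∑ k, (a k * p k ^ 2 + b k * p k)) :=
  stmt_11_general a b d P chat ha hb hd hP pν hpν ν hν heq
end

section
/- For q > 0, a, σ² > 0 and any γ, h, w with denominators positive: the WMMSE identity holds, namely log(1 + q|uᴴh|²/I) = max over ω ≥ 0 and β ∈ ℂ of [log ω − ω(1 − 2 Re(β* √q uᴴh) + |β|²(q|uᴴh|² + I)) + 1], where I > 0 is a fixed interference-plus-noise power, with the maximum attained at β* = √q uᴴh/(q|uᴴh|² + I) and ω* = 1 + q|uᴴh|²/I. -/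
/-!
The MSE of the receive scalar `β`, `1 - 2 Re(β̄ a) + |β|² D` with `a = √q g` and
`D = q|g|² + I`, is a quadratic in `β`; completing the square shows that it is minimised at
`β = a / D`, with minimum `1 - |a|²/D = I/D = (1 + q|g|²/I)⁻¹`. For fixed MSE `e > 0`,
`log ω - ω e + 1` is maximised at `ω = e⁻¹` with value `log e⁻¹`, by `log x ≤ x - 1`.
Combining the two maximisations gives the rate `log (1 + q|g|²/I)`.
-/

open Real RealInnerProductSpace

section CompletingSquare

variable {E : Type*} [NormedAddCommGroup E] [InnerProductSpace ℝ E]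

theorem one_sub_two_inner_add_norm_sq_mul_eq (a β : E) {D : ℝ} (hD : D ≠ 0) :
    1 - 2 * ⟪β, a⟫ + ‖β‖ ^ 2 * D = 1 - ‖a‖ ^ 2 / D + D * ‖β - D⁻¹ • a‖ ^ 2 := by
  rw [norm_sub_sq_real, real_inner_smul_right, norm_smul, Real.norm_eq_abs, mul_pow, sq_abs]
  field_simp
  ring

theorem one_sub_norm_sq_div_le (a β : E) {D : ℝ} (hD : 0 < D) :
    1 - ‖a‖ ^ 2 / D ≤ 1 - 2 * ⟪β, a⟫ + ‖β‖ ^ 2 * D := by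
  rw [one_sub_two_inner_add_norm_sq_mul_eq a β hD.ne']
  have : 0 ≤ D * ‖β - D⁻¹ • a‖ ^ 2 := by positivity
  linarith

theorem one_sub_two_inner_inv_smul_add_norm_sq_mul (a : E) {D : ℝ} (hD : D ≠ 0) :
    1 - 2 * ⟪D⁻¹ • a, a⟫ + ‖D⁻¹ • a‖ ^ 2 * D = 1 - ‖a‖ ^ 2 / D := by
  rw [one_sub_two_inner_add_norm_sq_mul_eq a _ hD, sub_self, norm_zero]
  ring

end CompletingSquare

theorem Real.log_sub_mul_inv_add_one_le {x ω : ℝ} (hx : 0 < x) (hω : 0 < ω) :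
    log ω - ω * x⁻¹ + 1 ≤ log x := by
  have h := log_le_sub_one_of_pos (div_pos hω hx)
  rw [log_div hω.ne' hx.ne', div_eq_mul_inv] at h
  linarith

theorem Complex.re_conj_mul_eq_inner (β a : ℂ) : ((starRingEnd ℂ) β * a).re = ⟪β, a⟫ := by
  rw [Complex.inner, mul_comm]

/-- Scalar WMMSE rate–MSE identity: log(1 + q|g|²/I) equals the maximum over ω > 0 and
β ∈ ℂ of log ω − ω(1 − 2 Re(β* √q g) + |β|²(q|g|² + I)) + 1, attained at
β* = √q g/(q|g|² + I) and ω* = 1 + q|g|²/I. -/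
theorem stmt_17 (g : ℂ) (q I' : ℝ) (hq : 0 < q) (hI : 0 < I')
    (F : ℝ → ℂ → ℝ)
    (hF : ∀ ω β, F ω β = Real.log ω
      - ω * (1 - 2 * ((starRingEnd ℂ) β * (Real.sqrt q : ℂ) * g).re
        + ‖β‖ ^ 2 * (q * ‖g‖ ^ 2 + I')) + 1) :
    let βs : ℂ := ((Real.sqrt q : ℂ) * g) / ((q * ‖g‖ ^ 2 + I' : ℝ) : ℂ)
    let ωs : ℝ := 1 + q * ‖g‖ ^ 2 / I'
    F ωs βs = Real.log (1 + q * ‖g‖ ^ 2 / I') ∧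
    (∀ ω : ℝ, 0 < ω → ∀ β : ℂ, F ω β ≤ Real.log (1 + q * ‖g‖ ^ 2 / I')) := by
  intro βs ωs
  set a : ℂ := (Real.sqrt q : ℂ) * g
  set D : ℝ := q * ‖g‖ ^ 2 + I'
  have hD : 0 < D := by positivity
  have hωs : 0 < ωs := by positivity
  have hF' : ∀ ω β, F ω β = log ω - ω * (1 - 2 * ⟪β, a⟫ + ‖β‖ ^ 2 * D) + 1 := by
    intro ω β
    rw [hF, mul_assoc, Complex.re_conj_mul_eq_inner]
  have hβs : βs = D⁻¹ • a := by
    rw [Complex.real_smul, Complex.ofReal_inv, inv_mul_eq_div]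
  have hmin : 1 - ‖a‖ ^ 2 / D = ωs⁻¹ := by
    rw [norm_mul, Complex.norm_real, Real.norm_of_nonneg (sqrt_nonneg q), mul_pow,
      sq_sqrt hq.le]
    simp only [D, ωs]
    field_simp
    ring
  refine ⟨?_, fun ω hω β => ?_⟩
  · rw [hF', hβs, one_sub_two_inner_inv_smul_add_norm_sq_mul a hD.ne', hmin,
      mul_inv_cancel₀ hωs.ne']
    ring
  · calc F ω β ≤ log ω - ω * ωs⁻¹ + 1 := by
          rw [hF', ← hmin]
          gcongr
          exact one_sub_norm_sq_div_le a β hD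
      _ ≤ log ωs := log_sub_mul_inv_add_one_le hωs hω
end
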